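/- The map z restricted to admissible strings of length n that begin with * (i.e., s_n = 1) is a bijection onto {f_{n+1}, ..., f_{n+2} − 1}. -/
import Mathlib

open Finset

private def zz (n : ℕ) (s : Fin n → Bool) : ℕ :=
  ∑ i : Fin n, if s i then Nat.fib ((i : ℕ) + 2) else 0

private def Adm (n : ℕ) : Set (Fin n → Bool) :=
  {s | ∀ i j : Fin n, (j : ℕ) = (i : ℕ) + 1 → ¬(s i = true ∧ s j = true)}

private lemma zz_snoc (n : ℕ) (t : Fin n → Bool) (b : Bool) :
    zz (n + 1) (Fin.snoc t b) = zz n t + if b then Nat.fib (n + 2) else 0 := by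
  simp [zz, Fin.sum_univ_castSucc, Fin.snoc_castSucc, Fin.snoc_last]

private lemma adm_init {n : ℕ} {s : Fin (n + 1) → Bool} (h : s ∈ Adm (n + 1)) :
    Fin.init s ∈ Adm n := by
  intro i j hij
  exact h i.castSucc j.castSucc (by simp [hij])

private lemma adm_snoc_false {n : ℕ} {t : Fin n → Bool} (h : t ∈ Adm n) :
    Fin.snoc t false ∈ Adm (n + 1) := by
  intro i j hij ⟨hi, hj⟩
  by_cases hjn : (j : ℕ) = n
  · have : j = Fin.last n := Fin.ext hjn
    rw [this, Fin.snoc_last] at hj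
    exact absurd hj (by simp)
  · have hj' : (j : ℕ) < n := lt_of_le_of_ne (Nat.lt_succ_iff.mp j.isLt) hjn
    have hi' : (i : ℕ) < n := by omega
    have hie : i = Fin.castSucc ⟨(i : ℕ), hi'⟩ := Fin.ext rfl
    have hje : j = Fin.castSucc ⟨(j : ℕ), hj'⟩ := Fin.ext rfl
    rw [hie, Fin.snoc_castSucc] at hi
    rw [hje, Fin.snoc_castSucc] at hj
    exact h ⟨(i : ℕ), hi'⟩ ⟨(j : ℕ), hj'⟩ hij ⟨hi, hj⟩

private lemma adm_snoc_true {n : ℕ} {t : Fin (n + 1) → Bool} (h : t ∈ Adm (n + 1))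
    (hl : t (Fin.last n) = false) : Fin.snoc t true ∈ Adm (n + 2) := by
  intro i j hij ⟨hi, hj⟩
  by_cases hjn : (j : ℕ) = n + 1
  · have hie : i = Fin.castSucc (Fin.last n) := Fin.ext (by simp; omega)
    rw [hie, Fin.snoc_castSucc, hl] at hi
    exact absurd hi (by simp)
  · have hj' : (j : ℕ) < n + 1 := lt_of_le_of_ne (Nat.lt_succ_iff.mp j.isLt) hjn
    have hi' : (i : ℕ) < n + 1 := by omega
    have hie : i = Fin.castSucc ⟨(i : ℕ), hi'⟩ := Fin.ext rfl
    have hje : j = Fin.castSucc ⟨(j : ℕ), hj'⟩ := Fin.ext rfl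
    rw [hie, Fin.snoc_castSucc] at hi
    rw [hje, Fin.snoc_castSucc] at hj
    exact h ⟨(i : ℕ), hi'⟩ ⟨(j : ℕ), hj'⟩ hij ⟨hi, hj⟩

private lemma zz_eq (n : ℕ) (s : Fin (n + 1) → Bool) :
    zz (n + 1) s = zz n (Fin.init s) + if s (Fin.last n) then Nat.fib (n + 2) else 0 := by
  conv_lhs => rw [← Fin.snoc_init_self s]
  rw [zz_snoc]

private lemma init_last {n : ℕ} (s : Fin (n + 2) → Bool) :
    Fin.init s (Fin.last n) = s ((Fin.last n).castSucc) := rfl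

private lemma bijA : ∀ n : ℕ, Set.BijOn (zz n) (Adm n) (Set.Iio (Nat.fib (n + 2))) := by
  intro n
  induction n using Nat.strong_induction_on with
  | _ n ih =>
    match n with
    | 0 =>
      refine ⟨?_, ?_, ?_⟩
      · intro s _
        simp [zz, Nat.fib]
      · intro s _ t _ _
        funext i; exact absurd i.isLt (by omega)
      · intro k hk
        have : k = 0 := by simpa [Nat.fib] using hk
        exact ⟨fun _ => false, fun i j hij h => by simp at h, by simp [zz, this]⟩
    | 1 =>
      have hadm : ∀ s : Fin 1 → Bool, s ∈ Adm 1 := by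
        intro s i j hij
        have : (i : ℕ) = 0 := by omega
        omega
      have hz : ∀ s : Fin 1 → Bool, zz 1 s = if s 0 then 1 else 0 := by
        intro s; rw [zz, Fin.sum_univ_one]; rfl
      refine ⟨?_, ?_, ?_⟩
      · intro s _
        simp only [Set.mem_Iio, hz s, show Nat.fib 3 = 2 from rfl]
        split <;> omega
      · intro s _ t _ hst
        have h1 := hz s; have h2 := hz t
        funext i
        have : i = 0 := Subsingleton.elim _ _
        subst this
        rw [hst] at h1
        rw [h2] at h1
        cases hs : s 0 <;> cases ht : t 0 <;> simp [hs, ht] at h1 ⊢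
      · intro k hk
        simp only [Set.mem_Iio, show Nat.fib 3 = 2 from rfl] at hk
        interval_cases k
        · exact ⟨fun _ => false, hadm _, by rw [hz]; simp⟩
        · exact ⟨fun _ => true, hadm _, by rw [hz]; simp⟩
    | (m + 2) =>
      have A1 := ih (m + 1) (by omega)
      have A0 := ih m (by omega)
      have fibeq : Nat.fib (m + 4) = Nat.fib (m + 2) + Nat.fib (m + 3) := Nat.fib_add_two
      have e1 : Nat.fib (m + 1 + 2) = Nat.fib (m + 3) := rfl
      have e2 : Nat.fib (m + 2 + 2) = Nat.fib (m + 4) := rfl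
      -- key bound: value determined by last coordinate
      have hub : ∀ s : Fin (m + 2) → Bool, s ∈ Adm (m + 2) →
          (s (Fin.last (m + 1)) = false → zz (m + 2) s < Nat.fib (m + 3)) ∧
          (s (Fin.last (m + 1)) = true →
            Nat.fib (m + 3) ≤ zz (m + 2) s ∧ zz (m + 2) s < Nat.fib (m + 4) ∧
            zz (m + 2) s = zz m (Fin.init (Fin.init s)) + Nat.fib (m + 3)) := by
        intro s hs
        constructor
        · intro hl
          rw [zz_eq, hl]
          simpa using A1.mapsTo (adm_init hs)
        · intro hl
          have h0 : s ((Fin.last m).castSucc) = false := by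
            by_contra h0
            exact hs ((Fin.last m).castSucc) (Fin.last (m + 1)) (by simp)
              ⟨Bool.not_eq_false _ |>.mp h0, hl⟩
          have hinit : Fin.init s (Fin.last m) = false := by rw [init_last]; exact h0
          have hzi : zz (m + 1) (Fin.init s) = zz m (Fin.init (Fin.init s)) := by
            rw [zz_eq, hinit]; simp
          have hii : Fin.init (Fin.init s) ∈ Adm m := adm_init (adm_init hs)
          have hlt : zz m (Fin.init (Fin.init s)) < Nat.fib (m + 2) := A0.mapsTo hii
          rw [zz_eq, hl]
          rw [if_pos rfl]
          refine ⟨by omega, by rw [hzi]; omega, by rw [hzi]⟩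
      refine ⟨?_, ?_, ?_⟩
      · intro s hs
        simp only [Set.mem_Iio]
        cases hl : s (Fin.last (m + 1)) with
        | false =>
          have := (hub s hs).1 hl
          have h2 : Nat.fib (m + 3) ≤ Nat.fib (m + 4) := Nat.fib_le_fib_succ
          omega
        | true => exact ((hub s hs).2 hl).2.1
      · intro s hs t ht hst
        have hlast : s (Fin.last (m + 1)) = t (Fin.last (m + 1)) := by
          cases hsl : s (Fin.last (m + 1)) <;> cases htl : t (Fin.last (m + 1)) <;> try rfl
          · have h1 := (hub s hs).1 hsl
            have h2 := ((hub t ht).2 htl).1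
            omega
          · have h1 := (hub t ht).1 htl
            have h2 := ((hub s hs).2 hsl).1
            omega
        cases hsl : s (Fin.last (m + 1)) with
        | false =>
          have htl : t (Fin.last (m + 1)) = false := hlast ▸ hsl
          have h1 : zz (m + 1) (Fin.init s) = zz (m + 1) (Fin.init t) := by
            have e1 : zz (m + 2) s = zz (m + 1) (Fin.init s) +
              if s (Fin.last (m + 1)) then Nat.fib (m + 3) else 0 := zz_eq (m + 1) s
            have e2 : zz (m + 2) t = zz (m + 1) (Fin.init t) +
              if t (Fin.last (m + 1)) then Nat.fib (m + 3) else 0 := zz_eq (m + 1) t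
            rw [hsl] at e1; rw [htl] at e2
            simp at e1 e2
            omega
          have := A1.injOn (adm_init hs) (adm_init ht) h1
          calc s = Fin.snoc (Fin.init s) (s (Fin.last (m + 1))) := (Fin.snoc_init_self s).symm
            _ = Fin.snoc (Fin.init t) (t (Fin.last (m + 1))) := by rw [this, hsl, htl]
            _ = t := Fin.snoc_init_self t
        | true =>
          have htl : t (Fin.last (m + 1)) = true := hlast ▸ hsl
          have e1 := ((hub s hs).2 hsl).2.2
          have e2 := ((hub t ht).2 htl).2.2
          have h1 : zz m (Fin.init (Fin.init s)) = zz m (Fin.init (Fin.init t)) := by omega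
          have hii := A0.injOn (adm_init (adm_init hs)) (adm_init (adm_init ht)) h1
          have h0s : s ((Fin.last m).castSucc) = false := by
            by_contra h0
            exact hs ((Fin.last m).castSucc) (Fin.last (m + 1)) (by simp)
              ⟨Bool.not_eq_false _ |>.mp h0, hsl⟩
          have h0t : t ((Fin.last m).castSucc) = false := by
            by_contra h0
            exact ht ((Fin.last m).castSucc) (Fin.last (m + 1)) (by simp)
              ⟨Bool.not_eq_false _ |>.mp h0, htl⟩
          have hinits : Fin.init s = Fin.init t := by
            calc Fin.init s = Fin.snoc (Fin.init (Fin.init s)) (Fin.init s (Fin.last m)) :=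
                  (Fin.snoc_init_self _).symm
              _ = Fin.snoc (Fin.init (Fin.init t)) (Fin.init t (Fin.last m)) := by
                  rw [hii, init_last, init_last, h0s, h0t]
              _ = Fin.init t := Fin.snoc_init_self _
          calc s = Fin.snoc (Fin.init s) (s (Fin.last (m + 1))) := (Fin.snoc_init_self s).symm
            _ = Fin.snoc (Fin.init t) (t (Fin.last (m + 1))) := by rw [hinits, hsl, htl]
            _ = t := Fin.snoc_init_self t
      · intro k hk
        simp only [Set.mem_Iio] at hk
        by_cases hk3 : k < Nat.fib (m + 3)
        · obtain ⟨t, ht, hz⟩ := A1.surjOn (show k ∈ Set.Iio (Nat.fib (m + 3)) from hk3)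
          refine ⟨Fin.snoc t false, adm_snoc_false ht, ?_⟩
          rw [zz_snoc]
          simpa using hz
        · push_neg at hk3
          have h1 : k - Nat.fib (m + 3) < Nat.fib (m + 2) := by omega
          obtain ⟨t, ht, hz⟩ := A0.surjOn (show k - Nat.fib (m + 3) ∈ Set.Iio (Nat.fib (m + 2)) from h1)
          refine ⟨Fin.snoc (Fin.snoc t false) true,
            adm_snoc_true (adm_snoc_false ht) (by simp), ?_⟩
          rw [zz_snoc, zz_snoc, hz]
          simp
          omega

open Finset in
/-- The Zeckendorf map `z` restricted to admissible strings of length `n` that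
begin with `*` (i.e. the highest-indexed symbol `s_n` is `1`) is a bijection
onto `{f (n+1), ..., f (n+2) - 1}`. -/
theorem zeckendorf_bijOn_startStar (n : ℕ) (hn : 0 < n) :
    Set.BijOn
      (fun s : Fin n → Bool => ∑ i : Fin n, if s i then Nat.fib ((i : ℕ) + 2) else 0)
      {s : Fin n → Bool |
        (∀ i j : Fin n, (j : ℕ) = (i : ℕ) + 1 → ¬(s i = true ∧ s j = true)) ∧
        s ⟨n - 1, by omega⟩ = true}
      (Set.Ico (Nat.fib (n + 1)) (Nat.fib (n + 2))) := by
  obtain ⟨m, rfl⟩ : ∃ m, n = m + 1 := ⟨n - 1, by omega⟩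
  have hAm1 := bijA (m + 1)
  have hAm := bijA m
  have hlastidx : (⟨m + 1 - 1, by omega⟩ : Fin (m + 1)) = Fin.last m := Fin.ext (by simp)
  show Set.BijOn (zz (m + 1)) _ _
  refine ⟨?_, ?_, ?_⟩
  · rintro s ⟨hadm, hl⟩
    rw [hlastidx] at hl
    have hub : zz (m + 1) s < Nat.fib (m + 3) := hAm1.mapsTo hadm
    have hlb : Nat.fib (m + 2) ≤ zz (m + 1) s := by
      rw [zz_eq, hl]
      simp
    exact ⟨hlb, hub⟩
  · rintro s ⟨hadms, _⟩ t ⟨hadmt, _⟩ hst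
    exact hAm1.injOn hadms hadmt hst
  · intro k hk
    obtain ⟨hk1, hk2⟩ := hk
    obtain ⟨s, hs, hzs⟩ := hAm1.surjOn (show k ∈ Set.Iio (Nat.fib (m + 3)) from hk2)
    refine ⟨s, ⟨hs, ?_⟩, hzs⟩
    rw [hlastidx]
    by_contra hl
    have hl' : s (Fin.last m) = false := Bool.not_eq_true _ |>.mp hl
    have : zz (m + 1) s = zz m (Fin.init s) := by rw [zz_eq, hl']; simp
    have hb : zz m (Fin.init s) < Nat.fib (m + 2) := hAm.mapsTo (adm_init hs)
    have e : Nat.fib (m + 1 + 1) = Nat.fib (m + 2) := rfl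
    omega
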